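/- arXiv:1811.04635 — 2 statements merged into one kernel-verified Lean document; each statement's English description precedes it below -/
import Mathlib

section
/- Let h_k = η_k·h̄_k + γ_k·U_k(ω̃_k ⊙ z_k) and h_ℓ = η_ℓ·h̄_ℓ + γ_ℓ·U_ℓ(ω̃_ℓ ⊙ z_ℓ) be two independent M-dimensional Weichselberger Ricean channel vectors (z_k and z_ℓ independent of each other). Then E[|h_kᴴ h_ℓ|²] = η_k²η_ℓ²·|h̄_kᴴh̄_ℓ|² + γ_k²γ_ℓ²·tr(Q_k Q_ℓ) + η_k²γ_ℓ²·(h̄_kᴴ Q_ℓ h̄_k) + γ_k²η_ℓ²·(h̄_ℓᴴ Q_k h̄_ℓ), where Q_j = U_j diag(ω_j) U_jᴴ for j ∈ {k, ℓ}. -/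
open MeasureTheory ProbabilityTheory Matrix Finset

/-!
For independent random vectors `X`, `Y` with correlation matrices `R_X = E[X Xᴴ]` and
`R_Y = E[Y Yᴴ]`, expanding `|Xᴴ Y|² = ∑ i j, (X_i X̄_j) (Y_j Ȳ_i)` and factoring each
expectation by independence gives `E[|Xᴴ Y|²] = tr (R_X R_Y)`. A Ricean channel
`h = η h̄ + γ U (ω̃ ⊙ z)` is an affine image `a + B z` of a centred vector with `E[z zᴴ] = 1`,
so `R = a aᴴ + B Bᴴ = η² h̄ h̄ᴴ + γ² Q`, and expanding `tr (R_k R_ℓ)` produces the four terms.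
-/

section Correlation

variable {Ω ι κ 𝕜 : Type*} [MeasurableSpace Ω] {μ : Measure Ω} [RCLike 𝕜]

noncomputable def correlationMatrix (μ : Measure Ω) (X : Ω → ι → 𝕜) : Matrix ι ι 𝕜 :=
  Matrix.of fun i j => ∫ x, X x i * star (X x j) ∂μ

lemma MeasureTheory.MemLp.integrable_mul_star {f g : Ω → 𝕜} (hf : MemLp f 2 μ)
    (hg : MemLp g 2 μ) : Integrable (fun x => f x * star (g x)) μ :=
  hf.integrable_mul hg.star

theorem ProbabilityTheory.IndepFun.integral_norm_star_dotProduct_sq [Fintype ι]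
    {X Y : Ω → ι → 𝕜} (hXY : IndepFun X Y μ) (hX : ∀ i, MemLp (X · i) 2 μ)
    (hY : ∀ i, MemLp (Y · i) 2 μ) :
    ((∫ x, ‖star (X x) ⬝ᵥ Y x‖ ^ 2 ∂μ : ℝ) : 𝕜)
      = trace (correlationMatrix μ X * correlationMatrix μ Y) := by
  have hindep : ∀ i j,
      IndepFun (fun x => X x i * star (X x j)) (fun x => Y x j * star (Y x i)) μ := fun i j =>
    hXY.comp (φ := fun v : ι → 𝕜 => v i * star (v j))
      (ψ := fun v : ι → 𝕜 => v j * star (v i)) (by fun_prop) (by fun_prop)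
  have hint : ∀ i j,
      Integrable (fun x => (X x i * star (X x j)) * (Y x j * star (Y x i))) μ := fun i j =>
    (hindep i j).integrable_mul ((hX i).integrable_mul_star (hX j))
      ((hY j).integrable_mul_star (hY i))
  have hexpand : ∀ x, ((‖star (X x) ⬝ᵥ Y x‖ ^ 2 : ℝ) : 𝕜)
      = ∑ i, ∑ j, (X x i * star (X x j)) * (Y x j * star (Y x i)) := by
    intro x
    rw [RCLike.ofReal_pow, ← RCLike.mul_conj, dotProduct, map_sum, Finset.sum_mul_sum,
      Finset.sum_comm]
    refine Finset.sum_congr rfl fun i _ => Finset.sum_congr rfl fun j _ => ?_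
    simp only [Pi.star_apply, map_mul, RCLike.star_def, RCLike.conj_conj]
    ring
  simp_rw [← integral_ofReal, hexpand]
  rw [integral_finsetSum _ fun i _ => integrable_finsetSum _ fun j _ => hint i j]
  refine Finset.sum_congr rfl fun i _ => ?_
  rw [integral_finsetSum _ fun j _ => hint i j]
  refine Finset.sum_congr rfl fun j _ => ?_
  exact (hindep i j).integral_fun_mul_eq_mul_integral
    ((hX i).integrable_mul_star (hX j)).1 ((hY j).integrable_mul_star (hY i)).1

lemma memLp_mulVec_apply [Fintype ι] {p : ENNReal} (B : Matrix κ ι 𝕜) {z : Ω → ι → 𝕜}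
    (hz : ∀ m, MemLp (z · m) p μ) (i : κ) : MemLp (fun x => (B *ᵥ z x) i) p μ :=
  memLp_finsetSum _ fun m _ => (hz m).const_mul (B i m)

lemma integral_mulVec_apply [Fintype ι] (B : Matrix κ ι 𝕜) {z : Ω → ι → 𝕜}
    (hz : ∀ m, Integrable (z · m) μ) (i : κ) :
    ∫ x, (B *ᵥ z x) i ∂μ = (B *ᵥ fun m => ∫ x, z x m ∂μ) i := by
  simp only [mulVec, dotProduct]
  rw [integral_finsetSum _ fun m _ => (hz m).const_mul (B i m)]
  simp only [integral_const_mul]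

theorem correlationMatrix_mulVec [Fintype ι] (B : Matrix κ ι 𝕜) {z : Ω → ι → 𝕜}
    (hz : ∀ m, MemLp (z · m) 2 μ) :
    correlationMatrix μ (fun x => B *ᵥ z x) = B * correlationMatrix μ z * Bᴴ := by
  ext i j
  have hexpand : ∀ x, (B *ᵥ z x) i * star ((B *ᵥ z x) j)
      = ∑ m, ∑ n, B i m * star (B j n) * (z x m * star (z x n)) := by
    intro x
    simp only [mulVec, dotProduct, star_sum, Finset.sum_mul_sum, star_mul']
    exact Finset.sum_congr rfl fun m _ => Finset.sum_congr rfl fun n _ => by ring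
  have hint : ∀ m n, Integrable (fun x => B i m * star (B j n) * (z x m * star (z x n))) μ :=
    fun m n => ((hz m).integrable_mul_star (hz n)).const_mul _
  simp only [correlationMatrix, of_apply, hexpand, mul_apply, conjTranspose_apply,
    Finset.sum_mul]
  rw [integral_finsetSum _ fun m _ => integrable_finsetSum _ fun n _ => hint m n,
    Finset.sum_comm]
  refine Finset.sum_congr rfl fun m _ => ?_
  rw [integral_finsetSum _ fun n _ => hint m n]
  refine Finset.sum_congr rfl fun n _ => ?_
  rw [integral_const_mul]
  ring

theorem correlationMatrix_const_add [IsProbabilityMeasure μ] (a : ι → 𝕜) {Y : Ω → ι → 𝕜}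
    (hY : ∀ i, MemLp (Y · i) 2 μ) (hY0 : ∀ i, ∫ x, Y x i ∂μ = 0) :
    correlationMatrix μ (fun x => a + Y x) = vecMulVec a (star a) + correlationMatrix μ Y := by
  ext i j
  have hYi : Integrable (Y · i) μ := (hY i).integrable one_le_two
  have hYj : Integrable (fun x => star (Y x j)) μ := (hY j).star.integrable one_le_two
  have hcross_int : Integrable (fun x => a i * star (Y x j) + star (a j) * Y x i) μ :=
    (hYj.const_mul _).add (hYi.const_mul _)
  have hcross : ∫ x, a i * star (Y x j) + star (a j) * Y x i ∂μ = 0 := by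
    rw [integral_add (hYj.const_mul _) (hYi.const_mul _), integral_const_mul,
      integral_const_mul]
    simp only [RCLike.star_def, integral_conj, hY0, map_zero, mul_zero, add_zero]
  have hdet_int : Integrable
      (fun x => a i * star (a j) + (a i * star (Y x j) + star (a j) * Y x i)) μ :=
    (integrable_const _).add hcross_int
  have hexpand : ∀ x, (a + Y x) i * star ((a + Y x) j)
      = a i * star (a j) + (a i * star (Y x j) + star (a j) * Y x i)
        + Y x i * star (Y x j) := by
    intro x
    simp only [Pi.add_apply, star_add]
    ring
  simp only [correlationMatrix, of_apply, hexpand, Matrix.add_apply, vecMulVec_apply,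
    Pi.star_apply]
  rw [integral_add hdet_int ((hY i).integrable_mul_star (hY j)),
    integral_add (integrable_const _) hcross_int, hcross, integral_const, probReal_univ,
    one_smul, add_zero]

theorem correlationMatrix_eq_one [DecidableEq ι] {z : Ω → ι → 𝕜}
    (hindep : Pairwise fun i j => IndepFun (z · i) (z · j) μ)
    (hz : ∀ i, AEStronglyMeasurable (z · i) μ) (hmean : ∀ i, ∫ x, z x i ∂μ = 0)
    (hnorm : ∀ i, ∫ x, ‖z x i‖ ^ 2 ∂μ = 1) :
    correlationMatrix μ z = 1 := by
  ext i j
  rcases eq_or_ne i j with rfl | hij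
  · simp only [correlationMatrix, of_apply, one_apply_eq, RCLike.star_def, RCLike.mul_conj]
    exact_mod_cast hnorm i
  · have h : IndepFun (z · i) (fun x => star (z x j)) μ :=
      (hindep hij).comp measurable_id continuous_star.measurable
    rw [one_apply_ne hij, correlationMatrix, of_apply,
      h.integral_fun_mul_eq_mul_integral (hz i) (hz j).star, hmean, zero_mul]

end Correlation

lemma ProbabilityTheory.iIndepFun.indepFun_sumElim {Ω ι κ β : Type*} [MeasurableSpace Ω]
    {μ : Measure Ω} [MeasurableSpace β] [Fintype ι] [Fintype κ] {f : ι → Ω → β}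
    {g : κ → Ω → β} (h : iIndepFun (Sum.elim f g) μ) (hf : ∀ i, Measurable (f i))
    (hg : ∀ j, Measurable (g j)) :
    IndepFun (fun x i => f i x) (fun x j => g j x) μ := by
  have hST : Disjoint (univ.map .inl) (univ.map .inr : Finset (ι ⊕ κ)) := by
    simp [Finset.disjoint_left]
  exact (h.indepFun_finset _ _ hST (Sum.forall.2 ⟨hf, hg⟩)).comp
    (φ := fun (v : univ.map .inl → β) i => v ⟨.inl i, by simp⟩)
    (ψ := fun (v : univ.map .inr → β) j => v ⟨.inr j, by simp⟩)
    (by fun_prop) (by fun_prop)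

section Trace

variable {ι R 𝕜 : Type*} [Fintype ι] [CommSemiring R] [RCLike 𝕜]

lemma trace_vecMulVec_mul (u w : ι → R) (Q : Matrix ι ι R) :
    trace (vecMulVec u w * Q) = w ⬝ᵥ Q *ᵥ u := by
  rw [vecMulVec_mul, trace_vecMulVec, dotProduct_comm, dotProduct_mulVec]

lemma trace_mul_vecMulVec (P : Matrix ι ι R) (u w : ι → R) :
    trace (P * vecMulVec u w) = w ⬝ᵥ P *ᵥ u := by
  rw [mul_vecMulVec, trace_vecMulVec, dotProduct_comm]

lemma trace_vecMulVec_star_mul_vecMulVec_star (u v : ι → 𝕜) :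
    trace (vecMulVec u (star u) * vecMulVec v (star v))
      = ((‖star u ⬝ᵥ v‖ ^ 2 : ℝ) : 𝕜) := by
  rw [trace_mul_vecMulVec, vecMulVec_mulVec, dotProduct_smul, MulOpposite.smul_eq_mul_unop,
    MulOpposite.unop_op, star_dotProduct, RCLike.ofReal_pow, ← RCLike.conj_mul,
    RCLike.star_def]

theorem trace_smul_vecMulVec_add_smul_mul (a b c d : 𝕜) (u v : ι → 𝕜)
    (P Q : Matrix ι ι 𝕜) :
    trace ((a • vecMulVec u (star u) + b • P) * (c • vecMulVec v (star v) + d • Q))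
      = a * c * ((‖star u ⬝ᵥ v‖ ^ 2 : ℝ) : 𝕜) + b * d * trace (P * Q)
        + a * d * (star u ⬝ᵥ Q *ᵥ u) + b * c * (star v ⬝ᵥ P *ᵥ v) := by
  simp only [add_mul, mul_add, smul_mul_smul_comm, trace_add, trace_smul, smul_eq_mul]
  rw [trace_vecMulVec_star_mul_vecMulVec_star, trace_vecMulVec_mul, trace_mul_vecMulVec]
  ring

end Trace

section Ricean

variable {Ω ι : Type*} [MeasurableSpace Ω] {μ : Measure Ω} [Fintype ι]

noncomputable def riceanChannel (η γ : ℝ) (hbar : ι → ℂ) (U : Matrix ι ι ℂ) (ω : ι → ℝ)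
    (z : ι → ℂ) : ι → ℂ :=
  fun i => (η : ℂ) * hbar i + (γ : ℂ) * (U *ᵥ fun m => (Real.sqrt (ω m) : ℂ) * z m) i

variable (η γ : ℝ) (hbar : ι → ℂ) (U : Matrix ι ι ℂ) (ω : ι → ℝ)

lemma riceanChannel_eq_add_mulVec [DecidableEq ι] (z : ι → ℂ) :
    riceanChannel η γ hbar U ω z
      = (η : ℂ) • hbar
        + ((γ : ℂ) • (U * diagonal fun m => (Real.sqrt (ω m) : ℂ))) *ᵥ z := by
  have hdiag : (diagonal fun m => (Real.sqrt (ω m) : ℂ)) *ᵥ z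
      = fun m => (Real.sqrt (ω m) : ℂ) * z m := funext (mulVec_diagonal _ _)
  ext i
  simp only [riceanChannel, Pi.add_apply, Pi.smul_apply, smul_eq_mul, smul_mulVec,
    ← mulVec_mulVec, hdiag]

lemma measurable_riceanChannel : Measurable (riceanChannel η γ hbar U ω) := by
  unfold riceanChannel
  fun_prop

lemma memLp_riceanChannel_apply [IsFiniteMeasure μ] {p : ENNReal} {z : Ω → ι → ℂ}
    (hz : ∀ m, MemLp (z · m) p μ) (i : ι) :
    MemLp (fun x => riceanChannel η γ hbar U ω (z x) i) p μ :=
  have hUz := memLp_mulVec_apply U (fun m => (hz m).const_mul (Real.sqrt (ω m) : ℂ)) i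
  (memLp_const ((η : ℂ) * hbar i)).add (hUz.const_mul (γ : ℂ))

lemma smul_mul_diagonal_sqrt_mul_conjTranspose_self [DecidableEq ι] (hω : ∀ m, 0 ≤ ω m) :
    ((γ : ℂ) • (U * diagonal fun m => (Real.sqrt (ω m) : ℂ)))
        * ((γ : ℂ) • (U * diagonal fun m => (Real.sqrt (ω m) : ℂ)))ᴴ
      = (γ : ℂ) ^ 2 • (U * diagonal (fun m => (ω m : ℂ)) * Uᴴ) := by
  have hsq : (diagonal fun m => (Real.sqrt (ω m) : ℂ))
      * (diagonal fun m => (Real.sqrt (ω m) : ℂ)) = diagonal fun m => (ω m : ℂ) := by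
    rw [diagonal_mul_diagonal]
    congr 1
    ext m
    rw [← Complex.ofReal_mul, Real.mul_self_sqrt (hω m)]
  have hstar : star (fun m => (Real.sqrt (ω m) : ℂ)) = fun m => (Real.sqrt (ω m) : ℂ) :=
    funext fun m => Complex.conj_ofReal _
  rw [conjTranspose_smul, conjTranspose_mul, diagonal_conjTranspose, hstar,
    smul_mul_smul_comm, Complex.star_def, Complex.conj_ofReal, ← sq, Matrix.mul_assoc U,
    ← Matrix.mul_assoc (diagonal _), hsq, Matrix.mul_assoc]

theorem correlationMatrix_riceanChannel [IsProbabilityMeasure μ] [DecidableEq ι]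
    (hω : ∀ m, 0 ≤ ω m) {z : Ω → ι → ℂ}
    (hz_indep : Pairwise fun i j => IndepFun (z · i) (z · j) μ)
    (hz : ∀ m, MemLp (z · m) 2 μ) (hmean : ∀ m, ∫ x, z x m ∂μ = 0)
    (hnorm : ∀ m, ∫ x, ‖z x m‖ ^ 2 ∂μ = 1) :
    correlationMatrix μ (fun x => riceanChannel η γ hbar U ω (z x))
      = (η : ℂ) ^ 2 • vecMulVec hbar (star hbar)
        + (γ : ℂ) ^ 2 • (U * diagonal (fun m => (ω m : ℂ)) * Uᴴ) := by
  set B := (γ : ℂ) • (U * diagonal fun m => (Real.sqrt (ω m) : ℂ))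
  have hBz_mean : ∀ i, ∫ x, (B *ᵥ z x) i ∂μ = 0 := fun i => by
    rw [integral_mulVec_apply B (fun m => (hz m).integrable one_le_two)]
    simp [hmean, mulVec, dotProduct]
  simp_rw [riceanChannel_eq_add_mulVec]
  rw [correlationMatrix_const_add _ (memLp_mulVec_apply B hz) hBz_mean,
    correlationMatrix_mulVec B hz,
    correlationMatrix_eq_one hz_indep (fun m => (hz m).1) hmean hnorm, Matrix.mul_one,
    smul_mul_diagonal_sqrt_mul_conjTranspose_self _ _ _ hω, star_smul, Complex.star_def,
    Complex.conj_ofReal, smul_vecMulVec, vecMulVec_smul, smul_smul, ← sq]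

end Ricean

theorem weichselberger_interference_moment_general
    {Ω : Type*} [MeasurableSpace Ω] {μ : Measure Ω} [IsProbabilityMeasure μ]
    (M : ℕ) (hbark hbarl : Fin M → ℂ) (ηk γk ηl γl : ℝ)
    (Uk Ul : Matrix (Fin M) (Fin M) ℂ) (ωk ωl : Fin M → ℝ)
    (zk zl : Ω → Fin M → ℂ)
    (hωk_nonneg : ∀ m, 0 ≤ ωk m)
    (hωl_nonneg : ∀ m, 0 ≤ ωl m)
    (hzk_meas : ∀ m, Measurable fun x => zk x m)
    (hzl_meas : ∀ m, Measurable fun x => zl x m)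
    -- all 2M entries (of z_k together with z_ℓ) are mutually independent
    (hz_indep : iIndepFun
      (Sum.elim (fun m x => zk x m) (fun m x => zl x m) :
        Fin M ⊕ Fin M → Ω → ℂ) μ)
    (hzk_L4 : ∀ m, MemLp (fun x => zk x m) 4 μ)
    (hzl_L4 : ∀ m, MemLp (fun x => zl x m) 4 μ)
    (hzk_mean : ∀ m, ∫ x, zk x m ∂μ = 0)
    (hzl_mean : ∀ m, ∫ x, zl x m ∂μ = 0)
    (hzk_abs2 : ∀ m, ∫ x, ‖zk x m‖ ^ 2 ∂μ = 1)
    (hzl_abs2 : ∀ m, ∫ x, ‖zl x m‖ ^ 2 ∂μ = 1)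
    (hk hl : Ω → Fin M → ℂ)
    (hhk : ∀ x, hk x = fun i =>
      (ηk : ℂ) * hbark i
        + (γk : ℂ) * (Uk.mulVec fun m => (Real.sqrt (ωk m) : ℂ) * zk x m) i)
    (hhl : ∀ x, hl x = fun i =>
      (ηl : ℂ) * hbarl i
        + (γl : ℂ) * (Ul.mulVec fun m => (Real.sqrt (ωl m) : ℂ) * zl x m) i)
    (Qk Ql : Matrix (Fin M) (Fin M) ℂ)
    (hQk : Qk = Uk * Matrix.diagonal (fun m => (ωk m : ℂ)) * Ukᴴ)
    (hQl : Ql = Ul * Matrix.diagonal (fun m => (ωl m : ℂ)) * Ulᴴ) :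
    ((∫ x, ‖∑ i, star (hk x i) * hl x i‖ ^ 2 ∂μ : ℝ) : ℂ)
      = (ηk : ℂ) ^ 2 * (ηl : ℂ) ^ 2 * ((‖∑ i, star (hbark i) * hbarl i‖ ^ 2 : ℝ) : ℂ)
        + (γk : ℂ) ^ 2 * (γl : ℂ) ^ 2 * Matrix.trace (Qk * Ql)
        + (ηk : ℂ) ^ 2 * (γl : ℂ) ^ 2 * ∑ i, star (hbark i) * (Ql.mulVec hbark) i
        + (γk : ℂ) ^ 2 * (ηl : ℂ) ^ 2 * ∑ i, star (hbarl i) * (Qk.mulVec hbarl) i := by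
  obtain rfl : hk = fun x => riceanChannel ηk γk hbark Uk ωk (zk x) := funext hhk
  obtain rfl : hl = fun x => riceanChannel ηl γl hbarl Ul ωl (zl x) := funext hhl
  have hzk_L2 : ∀ m, MemLp (zk · m) 2 μ := fun m => (hzk_L4 m).mono_exponent (by norm_num)
  have hzl_L2 : ∀ m, MemLp (zl · m) 2 μ := fun m => (hzl_L4 m).mono_exponent (by norm_num)
  have hzk_indep : Pairwise fun m m' => IndepFun (zk · m) (zk · m') μ :=
    fun _ _ h => hz_indep.indepFun (Sum.inl_injective.ne h)
  have hzl_indep : Pairwise fun m m' => IndepFun (zl · m) (zl · m') μ :=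
    fun _ _ h => hz_indep.indepFun (Sum.inr_injective.ne h)
  have hindep := (hz_indep.indepFun_sumElim hzk_meas hzl_meas).comp
    (measurable_riceanChannel ηk γk hbark Uk ωk) (measurable_riceanChannel ηl γl hbarl Ul ωl)
  have hmoment := hindep.integral_norm_star_dotProduct_sq
    (memLp_riceanChannel_apply ηk γk hbark Uk ωk hzk_L2)
    (memLp_riceanChannel_apply ηl γl hbarl Ul ωl hzl_L2)
  rw [Function.comp_def, Function.comp_def,
    correlationMatrix_riceanChannel _ _ _ _ _ hωk_nonneg hzk_indep hzk_L2 hzk_mean hzk_abs2,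
    correlationMatrix_riceanChannel _ _ _ _ _ hωl_nonneg hzl_indep hzl_L2 hzl_mean hzl_abs2,
    trace_smul_vecMulVec_add_smul_mul, ← hQk, ← hQl] at hmoment
  exact hmoment

/-- Proposition 2, eq. (5): for two independent Weichselberger Ricean channels
`h_k`, `h_ℓ`, we have
`E[|h_kᴴh_ℓ|²] = η_k²η_ℓ²|h̄_kᴴh̄_ℓ|² + γ_k²γ_ℓ² tr(Q_kQ_ℓ)
  + η_k²γ_ℓ² h̄_kᴴQ_ℓh̄_k + γ_k²η_ℓ² h̄_ℓᴴQ_kh̄_ℓ`. -/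
theorem weichselberger_interference_moment
    {Ω : Type*} [MeasurableSpace Ω] {μ : Measure Ω} [IsProbabilityMeasure μ]
    (M : ℕ) (hbark hbarl : Fin M → ℂ) (ηk γk ηl γl : ℝ)
    (Uk Ul : Matrix (Fin M) (Fin M) ℂ) (ωk ωl : Fin M → ℝ)
    (zk zl : Ω → Fin M → ℂ)
    (hbark_norm : ∑ i, ‖hbark i‖ ^ 2 = (M : ℝ))
    (hbarl_norm : ∑ i, ‖hbarl i‖ ^ 2 = (M : ℝ))
    (hηk : 0 ≤ ηk) (hγk : 0 ≤ γk) (hηγk : ηk ^ 2 + γk ^ 2 = 1)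
    (hηl : 0 ≤ ηl) (hγl : 0 ≤ γl) (hηγl : ηl ^ 2 + γl ^ 2 = 1)
    (hUk : Uk ∈ Matrix.unitaryGroup (Fin M) ℂ)
    (hUl : Ul ∈ Matrix.unitaryGroup (Fin M) ℂ)
    (hωk_nonneg : ∀ m, 0 ≤ ωk m) (hωk_sum : ∑ m, ωk m = (M : ℝ))
    (hωl_nonneg : ∀ m, 0 ≤ ωl m) (hωl_sum : ∑ m, ωl m = (M : ℝ))
    (hzk_meas : ∀ m, Measurable fun x => zk x m)
    (hzl_meas : ∀ m, Measurable fun x => zl x m)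
    -- all 2M entries (of z_k together with z_ℓ) are mutually independent
    (hz_indep : iIndepFun
      (Sum.elim (fun m x => zk x m) (fun m x => zl x m) :
        Fin M ⊕ Fin M → Ω → ℂ) μ)
    (hzk_L4 : ∀ m, MemLp (fun x => zk x m) 4 μ)
    (hzl_L4 : ∀ m, MemLp (fun x => zl x m) 4 μ)
    (hzk_mean : ∀ m, ∫ x, zk x m ∂μ = 0)
    (hzl_mean : ∀ m, ∫ x, zl x m ∂μ = 0)
    (hzk_sq : ∀ m, ∫ x, (zk x m) ^ 2 ∂μ = 0)
    (hzl_sq : ∀ m, ∫ x, (zl x m) ^ 2 ∂μ = 0)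
    (hzk_abs2 : ∀ m, ∫ x, ‖zk x m‖ ^ 2 ∂μ = 1)
    (hzl_abs2 : ∀ m, ∫ x, ‖zl x m‖ ^ 2 ∂μ = 1)
    (hzk_abs4 : ∀ m, ∫ x, ‖zk x m‖ ^ 4 ∂μ = 2)
    (hzl_abs4 : ∀ m, ∫ x, ‖zl x m‖ ^ 4 ∂μ = 2)
    (hk hl : Ω → Fin M → ℂ)
    (hhk : ∀ x, hk x = fun i =>
      (ηk : ℂ) * hbark i
        + (γk : ℂ) * (Uk.mulVec fun m => (Real.sqrt (ωk m) : ℂ) * zk x m) i)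
    (hhl : ∀ x, hl x = fun i =>
      (ηl : ℂ) * hbarl i
        + (γl : ℂ) * (Ul.mulVec fun m => (Real.sqrt (ωl m) : ℂ) * zl x m) i)
    (Qk Ql : Matrix (Fin M) (Fin M) ℂ)
    (hQk : Qk = Uk * Matrix.diagonal (fun m => (ωk m : ℂ)) * Ukᴴ)
    (hQl : Ql = Ul * Matrix.diagonal (fun m => (ωl m : ℂ)) * Ulᴴ) :
    ((∫ x, ‖∑ i, star (hk x i) * hl x i‖ ^ 2 ∂μ : ℝ) : ℂ)
      = (ηk : ℂ) ^ 2 * (ηl : ℂ) ^ 2 * ((‖∑ i, star (hbark i) * hbarl i‖ ^ 2 : ℝ) : ℂ)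
        + (γk : ℂ) ^ 2 * (γl : ℂ) ^ 2 * Matrix.trace (Qk * Ql)
        + (ηk : ℂ) ^ 2 * (γl : ℂ) ^ 2 * ∑ i, star (hbark i) * (Ql.mulVec hbark) i
        + (γk : ℂ) ^ 2 * (ηl : ℂ) ^ 2 * ∑ i, star (hbarl i) * (Qk.mulVec hbarl) i :=
  weichselberger_interference_moment_general M hbark hbarl ηk γk ηl γl Uk Ul ωk ωl zk zl hωk_nonneg
    hωl_nonneg hzk_meas hzl_meas hz_indep hzk_L4 hzl_L4 hzk_mean hzl_mean hzk_abs2 hzl_abs2 hk hl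
    hhk hhl Qk Ql hQk hQl
end

section
/- (Channel hardening, Corollary 1) For each M ∈ ℕ, let h^(M) = η·h̄^(M) + γ·U^(M)(ω̃^(M) ⊙ z^(M)) be an M-dimensional Weichselberger Ricean channel vector, all defined on a common probability space. Assume there is a constant C < ∞ such that for every M and every m ≤ M, ω^(M)_m ≤ C and |v^(M)_m| ≤ C, where v^(M) = (U^(M))ᴴ h̄^(M). Then ‖h^(M)‖²/M converges to 1 in probability as M → ∞. -/
/-!
Since `U` is unitary, `‖h‖² = M + ∑ₘ Wₘ` with
`Wₘ = 2ηγ √ωₘ Re(conj vₘ zₘ) + γ² ωₘ (|zₘ|² - 1)`, where `v = Uᴴ h̄`.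
The `Wₘ` are independent and centred, and the bounds `ωₘ ≤ C`, `|vₘ| ≤ C` give
`Var Wₘ ≤ 2C³ + 2C²`, so `Var ‖h‖² = O(M)` and Chebyshev's inequality yields
`‖h‖²/M → 1` in probability.
-/

open MeasureTheory ProbabilityTheory Matrix Finset Filter ComplexConjugate
open scoped Topology

section ChannelGain

variable {ι : Type*} [Fintype ι]

lemma re_star_dotProduct_self (a : ι → ℂ) : (star a ⬝ᵥ a).re = ∑ i, ‖a i‖ ^ 2 := by
  simp only [dotProduct, Complex.re_sum, Pi.star_apply, Complex.star_def, Complex.conj_mul']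
  norm_cast

lemma sum_norm_sq_mulVec_of_mem_unitaryGroup [DecidableEq ι] {U : Matrix ι ι ℂ}
    (hU : U ∈ unitaryGroup ι ℂ) (w : ι → ℂ) : ∑ i, ‖(U *ᵥ w) i‖ ^ 2 = ∑ i, ‖w i‖ ^ 2 := by
  rw [← re_star_dotProduct_self, ← re_star_dotProduct_self, star_mulVec, dotProduct_mulVec,
    vecMul_vecMul, ← star_eq_conjTranspose, (mem_unitaryGroup_iff').1 hU, vecMul_one]

lemma sum_norm_sq_add_mulVec_of_mem_unitaryGroup [DecidableEq ι] {U : Matrix ι ι ℂ}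
    (hU : U ∈ unitaryGroup ι ℂ) (a w : ι → ℂ) :
    ∑ i, ‖a i + (U *ᵥ w) i‖ ^ 2
      = ∑ i, ‖a i‖ ^ 2 + ∑ i, ‖w i‖ ^ 2 + 2 * ∑ i, (conj ((Uᴴ *ᵥ a) i) * w i).re := by
  have hcross : ∑ i, (a i * conj ((U *ᵥ w) i)).re = ∑ i, (conj ((Uᴴ *ᵥ a) i) * w i).re :=
    calc ∑ i, (a i * conj ((U *ᵥ w) i)).re = (star a ⬝ᵥ U *ᵥ w).re := by
          simp only [dotProduct, Complex.re_sum]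
          congr! 1 with i
          rw [← Complex.conj_re]
          simp [mul_comm]
      _ = (star (Uᴴ *ᵥ a) ⬝ᵥ w).re := by
          rw [dotProduct_mulVec, star_mulVec, conjTranspose_conjTranspose]
      _ = ∑ i, (conj ((Uᴴ *ᵥ a) i) * w i).re := by
          simp [dotProduct, Complex.re_sum]
  simp only [← Complex.normSq_eq_norm_sq, Complex.normSq_add, sum_add_distrib, ← mul_sum]
  simp only [hcross, Complex.normSq_eq_norm_sq, sum_norm_sq_mulVec_of_mem_unitaryGroup hU]

noncomputable def gainFluctuation (a : ℂ) (b : ℝ) (u : ℂ) : ℝ :=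
  (a * u).re + b * (‖u‖ ^ 2 - 1)

lemma sum_norm_sq_ricean_eq [DecidableEq ι] {η γ : ℝ} (hηγ : η ^ 2 + γ ^ 2 = 1) {hbar : ι → ℂ}
    (hbar_norm : ∑ i, ‖hbar i‖ ^ 2 = Fintype.card ι) {U : Matrix ι ι ℂ}
    (hU : U ∈ unitaryGroup ι ℂ) {ω : ι → ℝ} (hω_nonneg : ∀ m, 0 ≤ ω m)
    (hω_sum : ∑ m, ω m = Fintype.card ι) (u : ι → ℂ) :
    ∑ i, ‖(η : ℂ) * hbar i + (γ : ℂ) * (U *ᵥ fun m => (√(ω m) : ℂ) * u m) i‖ ^ 2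
      = Fintype.card ι + ∑ m, gainFluctuation
          (2 * η * γ * √(ω m) * conj ((Uᴴ *ᵥ hbar) m)) (γ ^ 2 * ω m) (u m) := by
  set w : ι → ℂ := fun m => (γ : ℂ) * ((√(ω m) : ℂ) * u m)
  have hUw : ∀ i, (γ : ℂ) * (U *ᵥ fun m => (√(ω m) : ℂ) * u m) i = (U *ᵥ w) i := fun i => by
    rw [show w = (γ : ℂ) • fun m => (√(ω m) : ℂ) * u m from rfl, mulVec_smul]; rfl
  have hUa : Uᴴ *ᵥ (fun i => (η : ℂ) * hbar i) = (η : ℂ) • (Uᴴ *ᵥ hbar) := by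
    rw [← mulVec_smul]; rfl
  have hterm : ∀ m, ‖w m‖ ^ 2 + 2 * (conj (((η : ℂ) • (Uᴴ *ᵥ hbar)) m) * w m).re
      = gainFluctuation (2 * η * γ * √(ω m) * conj ((Uᴴ *ᵥ hbar) m)) (γ ^ 2 * ω m) (u m)
        + γ ^ 2 * ω m := fun m => by
    have hsq : √(ω m) ^ 2 = ω m := Real.sq_sqrt (hω_nonneg m)
    simp only [w, gainFluctuation, norm_mul, Complex.norm_real, Real.norm_eq_abs, mul_pow,
      sq_abs, hsq, Pi.smul_apply, smul_eq_mul, map_mul, Complex.conj_ofReal, Complex.mul_re,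
      Complex.mul_im, Complex.ofReal_re, Complex.ofReal_im, Complex.re_ofNat, Complex.im_ofNat]
    ring
  have hnorm_a : ∑ i, ‖(η : ℂ) * hbar i‖ ^ 2 = η ^ 2 * Fintype.card ι := by
    simp [mul_pow, ← mul_sum, hbar_norm]
  simp only [hUw]
  rw [sum_norm_sq_add_mulVec_of_mem_unitaryGroup hU, hUa, hnorm_a, add_assoc, mul_sum,
    ← sum_add_distrib]
  simp only [hterm, sum_add_distrib, ← mul_sum, hω_sum]
  linear_combination (Fintype.card ι : ℝ) * hηγ

end ChannelGain

@[fun_prop]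
lemma continuous_gainFluctuation (a : ℂ) (b : ℝ) : Continuous (gainFluctuation a b) := by
  unfold gainFluctuation; fun_prop

lemma gainFluctuation_sq_le (a : ℂ) (b : ℝ) (u : ℂ) :
    gainFluctuation a b u ^ 2 ≤ 2 * ‖a‖ ^ 2 * ‖u‖ ^ 2 + 2 * b ^ 2 * (‖u‖ ^ 2 - 1) ^ 2 := by
  have hre : (a * u).re ^ 2 ≤ ‖a‖ ^ 2 * ‖u‖ ^ 2 := by
    rw [← mul_pow, ← norm_mul, ← sq_abs]
    exact pow_le_pow_left₀ (abs_nonneg _) (Complex.abs_re_le_norm _) 2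
  unfold gainFluctuation
  nlinarith [sq_nonneg ((a * u).re - b * (‖u‖ ^ 2 - 1))]

section Moments

variable {Ω : Type*} [MeasurableSpace Ω] {μ : Measure Ω} {z : Ω → ℂ}

lemma integrable_norm_sq_of_memLp_four [IsFiniteMeasure μ] (hz : MemLp z 4 μ) :
    Integrable (fun x => ‖z x‖ ^ 2) μ :=
  (hz.mono_exponent (by norm_num)).integrable_norm_pow'

lemma integrable_norm_sq_sub_one_sq [IsFiniteMeasure μ] (hz : MemLp z 4 μ) :
    Integrable (fun x => (‖z x‖ ^ 2 - 1) ^ 2) μ := by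
  have h2 := integrable_norm_sq_of_memLp_four hz
  have h4 : Integrable (fun x => ‖z x‖ ^ 4) μ := hz.integrable_norm_pow'
  refine ((h4.sub (h2.const_mul 2)).add (integrable_const 1)).congr (ae_of_all _ fun x => ?_)
  simp only [Pi.add_apply, Pi.sub_apply]
  ring

lemma integral_norm_sq_sub_one_sq [IsProbabilityMeasure μ] (hz : MemLp z 4 μ)
    (habs2 : ∫ x, ‖z x‖ ^ 2 ∂μ = 1) (habs4 : ∫ x, ‖z x‖ ^ 4 ∂μ = 2) :
    ∫ x, (‖z x‖ ^ 2 - 1) ^ 2 ∂μ = 1 := by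
  have h2 := integrable_norm_sq_of_memLp_four hz
  have h4 : Integrable (fun x => ‖z x‖ ^ 4) μ := hz.integrable_norm_pow'
  have h42 : Integrable (fun x => ‖z x‖ ^ 4 - 2 * ‖z x‖ ^ 2) μ := h4.sub (h2.const_mul 2)
  calc ∫ x, (‖z x‖ ^ 2 - 1) ^ 2 ∂μ = ∫ x, (‖z x‖ ^ 4 - 2 * ‖z x‖ ^ 2 + 1) ∂μ := by
        congr 1 with x; ring
    _ = 1 := by
        rw [integral_add h42 (integrable_const 1), integral_sub h4 (h2.const_mul 2),
          integral_const_mul, habs4, habs2]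
        norm_num

variable (a : ℂ) (b : ℝ)

lemma integral_gainFluctuation [IsProbabilityMeasure μ] (hz : MemLp z 4 μ)
    (hmean : ∫ x, z x ∂μ = 0) (habs2 : ∫ x, ‖z x‖ ^ 2 ∂μ = 1) :
    ∫ x, gainFluctuation a b (z x) ∂μ = 0 := by
  have hz1 : Integrable z μ := hz.integrable (by norm_num)
  have h2 := integrable_norm_sq_of_memLp_four hz
  have hre : ∫ x, (a * z x).re ∂μ = 0 := by
    simpa [integral_const_mul, hmean] using integral_re (hz1.const_mul a)
  have hdev : ∫ x, b * (‖z x‖ ^ 2 - 1) ∂μ = 0 := by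
    rw [integral_const_mul, integral_sub h2 (integrable_const 1), habs2]
    simp
  have hre_int : Integrable (fun x => (a * z x).re) μ := (hz1.const_mul a).re
  have hdev_int : Integrable (fun x => b * (‖z x‖ ^ 2 - 1)) μ :=
    (h2.sub (integrable_const 1)).const_mul b
  unfold gainFluctuation
  rw [integral_add hre_int hdev_int, hre, hdev, add_zero]

lemma memLp_gainFluctuation [IsFiniteMeasure μ] (hz : MemLp z 4 μ) :
    MemLp (fun x => gainFluctuation a b (z x)) 2 μ := by
  have hg : Integrable (fun x => 2 * ‖a‖ ^ 2 * ‖z x‖ ^ 2 + 2 * b ^ 2 * (‖z x‖ ^ 2 - 1) ^ 2) μ :=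
    ((integrable_norm_sq_of_memLp_four hz).const_mul _).add
      ((integrable_norm_sq_sub_one_sq hz).const_mul _)
  have hmeas : AEStronglyMeasurable (fun x => gainFluctuation a b (z x)) μ :=
    (continuous_gainFluctuation a b).comp_aestronglyMeasurable hz.1
  refine (memLp_two_iff_integrable_sq hmeas).2
    (hg.mono' (hmeas.pow 2) (ae_of_all _ fun x => ?_))
  rw [Real.norm_of_nonneg (sq_nonneg _)]
  exact gainFluctuation_sq_le a b (z x)

lemma variance_gainFluctuation_le [IsProbabilityMeasure μ] (hz : MemLp z 4 μ)
    (hmean : ∫ x, z x ∂μ = 0) (habs2 : ∫ x, ‖z x‖ ^ 2 ∂μ = 1) (habs4 : ∫ x, ‖z x‖ ^ 4 ∂μ = 2) :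
    variance (fun x => gainFluctuation a b (z x)) μ ≤ 2 * ‖a‖ ^ 2 + 2 * b ^ 2 := by
  have h2 := integrable_norm_sq_of_memLp_four hz
  have h22 := integrable_norm_sq_sub_one_sq hz
  rw [variance_of_integral_eq_zero
    (memLp_gainFluctuation a b hz).aestronglyMeasurable.aemeasurable
    (integral_gainFluctuation a b hz hmean habs2)]
  calc ∫ x, gainFluctuation a b (z x) ^ 2 ∂μ
      ≤ ∫ x, (2 * ‖a‖ ^ 2 * ‖z x‖ ^ 2 + 2 * b ^ 2 * (‖z x‖ ^ 2 - 1) ^ 2) ∂μ :=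
        integral_mono_of_nonneg (ae_of_all _ fun x => sq_nonneg _)
          ((h2.const_mul _).add (h22.const_mul _))
          (ae_of_all _ fun x => gainFluctuation_sq_le a b (z x))
    _ = 2 * ‖a‖ ^ 2 + 2 * b ^ 2 := by
        rw [integral_add (h2.const_mul _) (h22.const_mul _), integral_const_mul,
          integral_const_mul, habs2, integral_norm_sq_sub_one_sq hz habs2 habs4, mul_one, mul_one]

lemma variance_gainFluctuation_ricean_le [IsProbabilityMeasure μ] {η γ : ℝ}
    (hηγ : η ^ 2 + γ ^ 2 = 1) {v : ℂ} {w C : ℝ} (hw : 0 ≤ w) (hwC : w ≤ C) (hvC : ‖v‖ ≤ C)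
    (hz : MemLp z 4 μ) (hmean : ∫ x, z x ∂μ = 0) (habs2 : ∫ x, ‖z x‖ ^ 2 ∂μ = 1)
    (habs4 : ∫ x, ‖z x‖ ^ 4 ∂μ = 2) :
    variance (fun x => gainFluctuation (2 * η * γ * √w * conj v) (γ ^ 2 * w) (z x)) μ
      ≤ 2 * C ^ 3 + 2 * C ^ 2 := by
  refine (variance_gainFluctuation_le _ _ hz hmean habs2 habs4).trans ?_
  have hC : 0 ≤ C := hw.trans hwC
  have hηγ4 : 4 * η ^ 2 * γ ^ 2 ≤ 1 := by nlinarith [sq_nonneg (η ^ 2 - γ ^ 2)]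
  have hγ2 : γ ^ 2 ≤ 1 := by nlinarith [sq_nonneg η]
  have hv2 : ‖v‖ ^ 2 ≤ C ^ 2 := pow_le_pow_left₀ (norm_nonneg v) hvC 2
  have hw2 : w ^ 2 ≤ C ^ 2 := pow_le_pow_left₀ hw hwC 2
  have hnorm : ‖2 * η * γ * √w * conj v‖ ^ 2 = 4 * η ^ 2 * γ ^ 2 * w * ‖v‖ ^ 2 := by
    simp only [norm_mul, Complex.norm_real, Real.norm_eq_abs, Complex.norm_conj,
      Complex.norm_ofNat, mul_pow, sq_abs, Real.sq_sqrt hw]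
    ring
  rw [hnorm]
  nlinarith [mul_le_mul hηγ4 (mul_le_mul hwC hv2 (sq_nonneg _) hC) (by positivity) zero_le_one,
    mul_le_mul hγ2 hγ2 (sq_nonneg γ) zero_le_one, mul_nonneg (sq_nonneg γ) hw]

end Moments

section WeakLaw

variable {Ω : Type*} [MeasurableSpace Ω] {μ : Measure Ω}

lemma variance_sum_le_of_iIndepFun {ι : Type*} [Fintype ι] {X : ι → Ω → ℝ} {K : ℝ}
    (hX : ∀ i, MemLp (X i) 2 μ) (hindep : iIndepFun X μ) (hK : ∀ i, variance (X i) μ ≤ K) :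
    variance (fun x => ∑ i, X i x) μ ≤ Fintype.card ι * K := by
  have hsum : (fun x => ∑ i, X i x) = ∑ i, X i := by ext x; simp
  rw [hsum, IndepFun.variance_sum (fun i _ => hX i) fun i _ j _ hij => hindep.indepFun hij]
  simpa using sum_le_sum fun i (_ : i ∈ univ) => hK i

theorem tendstoInMeasure_div_of_variance_le [IsFiniteMeasure μ] {S : ℕ → Ω → ℝ} {c K : ℝ}
    (hS : ∀ n, MemLp (S n) 2 μ) (hmean : ∀ n : ℕ, μ[S n] = n * c)
    (hvar : ∀ n, variance (S n) μ ≤ n * K) :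
    TendstoInMeasure μ (fun n x => S n x / n) atTop (fun _ => c) := by
  rw [tendstoInMeasure_iff_dist]
  intro ε hε
  have hchebyshev : ∀ n : ℕ, 1 ≤ n →
      μ {x | ε ≤ dist (S n x / n) c} ≤ ENNReal.ofReal (K / ε ^ 2 / n) := by
    intro n hn
    have hn0 : (0 : ℝ) < n := by exact_mod_cast hn
    have hset : {x | ε ≤ dist (S n x / n) c} = {x | ε * n ≤ |S n x - μ[S n]|} := by
      ext x
      have hdiv : S n x / n - c = (S n x - μ[S n]) / n := by rw [hmean]; field_simp
      simp only [Set.mem_ofPred_eq, Real.dist_eq, hdiv, abs_div, abs_of_pos hn0, le_div_iff₀ hn0]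
    calc μ {x | ε ≤ dist (S n x / n) c}
        ≤ ENNReal.ofReal (variance (S n) μ / (ε * n) ^ 2) :=
          hset ▸ meas_ge_le_variance_div_sq (hS n) (by positivity)
      _ ≤ ENNReal.ofReal (K / ε ^ 2 / n) := by
          refine ENNReal.ofReal_le_ofReal ?_
          calc variance (S n) μ / (ε * n) ^ 2 ≤ n * K / (ε * n) ^ 2 := by gcongr; exact hvar n
            _ = K / ε ^ 2 / n := by field_simp
  have hlim : Tendsto (fun n : ℕ => ENNReal.ofReal (K / ε ^ 2 / n)) atTop (𝓝 0) := by
    simpa using ENNReal.tendsto_ofReal (tendsto_const_div_atTop_nhds_zero_nat (K / ε ^ 2))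
  exact tendsto_of_tendsto_of_tendsto_of_le_of_le' tendsto_const_nhds hlim
    (Eventually.of_forall fun n => zero_le) ((eventually_ge_atTop 1).mono hchebyshev)

end WeakLaw

theorem channel_hardening_general
    {Ω : Type*} [MeasurableSpace Ω] {μ : Measure Ω} [IsProbabilityMeasure μ]
    (η γ : ℝ) (hηγ : η ^ 2 + γ ^ 2 = 1)
    (hbar : (M : ℕ) → Fin M → ℂ)
    (U : (M : ℕ) → Matrix (Fin M) (Fin M) ℂ)
    (ω : (M : ℕ) → Fin M → ℝ)
    (z : (M : ℕ) → Ω → Fin M → ℂ)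
    (h : (M : ℕ) → Ω → Fin M → ℂ)
    (v : (M : ℕ) → Fin M → ℂ)
    (C : ℝ)
    (hbar_norm : ∀ M, ∑ i, ‖hbar M i‖ ^ 2 = (M : ℝ))
    (hU : ∀ M, U M ∈ Matrix.unitaryGroup (Fin M) ℂ)
    (hω_nonneg : ∀ M m, 0 ≤ ω M m) (hω_sum : ∀ M, ∑ m, ω M m = (M : ℝ))
    (hz_indep : ∀ M, iIndepFun (fun m x => z M x m) μ)
    (hz_L4 : ∀ M m, MemLp (fun x => z M x m) 4 μ)
    (hz_mean : ∀ M m, ∫ x, z M x m ∂μ = 0)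
    (hz_abs2 : ∀ M m, ∫ x, ‖z M x m‖ ^ 2 ∂μ = 1)
    (hz_abs4 : ∀ M m, ∫ x, ‖z M x m‖ ^ 4 ∂μ = 2)
    (hh : ∀ M x, h M x = fun i =>
      (η : ℂ) * hbar M i
        + (γ : ℂ) * ((U M).mulVec fun m => (Real.sqrt (ω M m) : ℂ) * z M x m) i)
    (hv : ∀ M, v M = (U M)ᴴ.mulVec (hbar M))
    (hC_ω : ∀ M, ∀ m : Fin M, ω M m ≤ C)
    (hC_v : ∀ M, ∀ m : Fin M, ‖v M m‖ ≤ C) :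
    TendstoInMeasure μ (fun M x => (∑ i, ‖h M x i‖ ^ 2) / M)
      atTop (fun _ => (1 : ℝ)) := by
  set W : (M : ℕ) → Fin M → Ω → ℝ := fun M m x =>
    gainFluctuation (2 * η * γ * √(ω M m) * conj (v M m)) (γ ^ 2 * ω M m) (z M x m)
  have hgain : ∀ M, (fun x => ∑ i, ‖h M x i‖ ^ 2) = fun x => (M : ℝ) + ∑ m, W M m x := by
    intro M
    ext x
    have hexp := sum_norm_sq_ricean_eq hηγ (by simpa using hbar_norm M) (hU M) (hω_nonneg M)
      (by simpa using hω_sum M) (z M x)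
    rw [← hv M, Fintype.card_fin] at hexp
    rw [hh M x]
    exact hexp
  have hW_memLp : ∀ M m, MemLp (W M m) 2 μ := fun M m => memLp_gainFluctuation _ _ (hz_L4 M m)
  have hW_indep : ∀ M, iIndepFun (W M) μ := fun M =>
    (hz_indep M).comp _ fun m => (continuous_gainFluctuation _ _).measurable
  have hW_mean : ∀ M m, ∫ x, W M m x ∂μ = 0 := fun M m =>
    integral_gainFluctuation _ _ (hz_L4 M m) (hz_mean M m) (hz_abs2 M m)
  have hsum_memLp : ∀ M, MemLp (fun x => ∑ m, W M m x) 2 μ := fun M =>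
    memLp_finsetSum _ fun m _ => hW_memLp M m
  refine tendstoInMeasure_div_of_variance_le (K := 2 * C ^ 3 + 2 * C ^ 2) (fun M => ?_)
    (fun M => ?_) (fun M => ?_) <;> rw [hgain]
  · exact (memLp_const (M : ℝ)).add (hsum_memLp M)
  · rw [integral_add (integrable_const _) ((hsum_memLp M).integrable one_le_two),
      integral_finsetSum _ fun m _ => (hW_memLp M m).integrable one_le_two]
    simp [hW_mean]
  · rw [variance_const_add (hsum_memLp M).aestronglyMeasurable]
    simpa using variance_sum_le_of_iIndepFun (hW_memLp M) (hW_indep M) fun m =>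
      variance_gainFluctuation_ricean_le hηγ (hω_nonneg M m) (hC_ω M m) (hC_v M m) (hz_L4 M m)
        (hz_mean M m) (hz_abs2 M m) (hz_abs4 M m)

/-- Channel hardening (Corollary 1): for a family of `M`-dimensional
Weichselberger Ricean channels whose coupling coefficients `ω^(M)_m` and
LoS-projection entries `|v^(M)_m|` are uniformly bounded, the normalized
channel gain `‖h^(M)‖²/M` converges to `1` in probability as `M → ∞`. -/
theorem channel_hardening
    {Ω : Type*} [MeasurableSpace Ω] {μ : Measure Ω} [IsProbabilityMeasure μ]
    (η γ : ℝ) (hη : 0 ≤ η) (hγ : 0 ≤ γ) (hηγ : η ^ 2 + γ ^ 2 = 1)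
    (hbar : (M : ℕ) → Fin M → ℂ)
    (U : (M : ℕ) → Matrix (Fin M) (Fin M) ℂ)
    (ω : (M : ℕ) → Fin M → ℝ)
    (z : (M : ℕ) → Ω → Fin M → ℂ)
    (h : (M : ℕ) → Ω → Fin M → ℂ)
    (v : (M : ℕ) → Fin M → ℂ)
    (C : ℝ)
    (hbar_norm : ∀ M, ∑ i, ‖hbar M i‖ ^ 2 = (M : ℝ))
    (hU : ∀ M, U M ∈ Matrix.unitaryGroup (Fin M) ℂ)
    (hω_nonneg : ∀ M m, 0 ≤ ω M m) (hω_sum : ∀ M, ∑ m, ω M m = (M : ℝ))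
    (hz_meas : ∀ M m, Measurable fun x => z M x m)
    (hz_indep : ∀ M, iIndepFun (fun m x => z M x m) μ)
    (hz_L4 : ∀ M m, MemLp (fun x => z M x m) 4 μ)
    (hz_mean : ∀ M m, ∫ x, z M x m ∂μ = 0)
    (hz_sq : ∀ M m, ∫ x, (z M x m) ^ 2 ∂μ = 0)
    (hz_abs2 : ∀ M m, ∫ x, ‖z M x m‖ ^ 2 ∂μ = 1)
    (hz_abs4 : ∀ M m, ∫ x, ‖z M x m‖ ^ 4 ∂μ = 2)
    (hh : ∀ M x, h M x = fun i =>
      (η : ℂ) * hbar M i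
        + (γ : ℂ) * ((U M).mulVec fun m => (Real.sqrt (ω M m) : ℂ) * z M x m) i)
    (hv : ∀ M, v M = (U M)ᴴ.mulVec (hbar M))
    (hC_ω : ∀ M, ∀ m : Fin M, ω M m ≤ C)
    (hC_v : ∀ M, ∀ m : Fin M, ‖v M m‖ ≤ C) :
    TendstoInMeasure μ (fun M x => (∑ i, ‖h M x i‖ ^ 2) / M)
      atTop (fun _ => (1 : ℝ)) :=
  channel_hardening_general η γ hηγ hbar U ω z h v C hbar_norm hU hω_nonneg hω_sum hz_indep hz_L4
    hz_mean hz_abs2 hz_abs4 hh hv hC_ω hC_v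
end
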